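/- arXiv:math/0702453 — 4 statements merged into one kernel-verified Lean document; each statement's English description precedes it below -/
import Mathlib

section
/- For all 0 < t ≤ 1 and all points P, Q, R on the unit sphere S², the triangle inequality d_t(P,Q) + d_t(Q,R) ≥ d_t(P,R) holds. -/
noncomputable section

/-- The unit 2-sphere in `ℝ³`, i.e. in `EuclideanSpace ℝ (Fin 3)`. -/
def S2 : Set (EuclideanSpace ℝ (Fin 3)) := Metric.sphere (0 : EuclideanSpace ℝ (Fin 3)) 1

/-- The angle parameter `α = arcsin ((√(2 - t²) - t) / 2)`. -/
def alphaAngle (t : ℝ) : ℝ := Real.arcsin ((Real.sqrt (2 - t ^ 2) - t) / 2)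

/-- The metric `d_t` on the unit sphere: `d_t(P,Q) = d_E(P,Q)` if `∠POQ ≤ π - 2α`,
and `d_t(P,Q) = 2t + d_E(-P,Q)` otherwise. -/
def dt (t : ℝ) (P Q : EuclideanSpace ℝ (Fin 3)) : ℝ :=
  if EuclideanGeometry.angle P (0 : EuclideanSpace ℝ (Fin 3)) Q ≤ Real.pi - 2 * alphaAngle t
  then dist P Q
  else 2 * t + dist (-P) Q

lemma key_le (t x : ℝ) (ht0 : 0 < t) (ht1 : t ≤ 1) (hx1 : -1 ≤ x) (hx2 : x ≤ 1)
    (h : -(t * Real.sqrt (2 - t ^ 2)) ≤ x) :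
    Real.sqrt (2 - 2 * x) ≤ 2 * t + Real.sqrt (2 + 2 * x) := by
  set s := Real.sqrt (2 - t ^ 2) with hsdef
  have hs2 : s ^ 2 = 2 - t ^ 2 := Real.sq_sqrt (by nlinarith)
  have hsnn : 0 ≤ s := Real.sqrt_nonneg _
  set u := Real.sqrt (2 - 2 * x) with hudef
  set v := Real.sqrt (2 + 2 * x) with hvdef
  have hu2 : u ^ 2 = 2 - 2 * x := Real.sq_sqrt (by linarith)
  have hv2 : v ^ 2 = 2 + 2 * x := Real.sq_sqrt (by linarith)
  have hunn : 0 ≤ u := Real.sqrt_nonneg _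
  have hvnn : 0 ≤ v := Real.sqrt_nonneg _
  by_contra hlt
  push_neg at hlt
  have h1 : (2 * t + v) ^ 2 < u ^ 2 :=
    pow_lt_pow_left₀ hlt (by positivity) (by norm_num)
  have h2 : t * v < -(t ^ 2) - x := by nlinarith
  have h3 : x < -(t ^ 2) := by nlinarith [mul_nonneg ht0.le hvnn]
  have h4 : (t * v) ^ 2 < (-(t ^ 2) - x) ^ 2 :=
    pow_lt_pow_left₀ h2 (mul_nonneg ht0.le hvnn) (by norm_num)
  have h5 : x ^ 2 ≤ (t * s) ^ 2 := by
    have hts : 0 ≤ t * s := mul_nonneg ht0.le hsnn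
    have : x ≤ t * s := by nlinarith
    nlinarith
  nlinarith

lemma key_lt (t x : ℝ) (ht0 : 0 < t) (ht1 : t ≤ 1) (hx1 : -1 ≤ x) (hx2 : x ≤ 1)
    (h : x < -(t * Real.sqrt (2 - t ^ 2))) :
    2 * t + Real.sqrt (2 + 2 * x) < Real.sqrt (2 - 2 * x) := by
  set s := Real.sqrt (2 - t ^ 2) with hsdef
  have hs2 : s ^ 2 = 2 - t ^ 2 := Real.sq_sqrt (by nlinarith)
  have hsnn : 0 ≤ s := Real.sqrt_nonneg _
  have hs1 : 1 ≤ s := by nlinarith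
  set u := Real.sqrt (2 - 2 * x) with hudef
  set v := Real.sqrt (2 + 2 * x) with hvdef
  have hu2 : u ^ 2 = 2 - 2 * x := Real.sq_sqrt (by linarith)
  have hv2 : v ^ 2 = 2 + 2 * x := Real.sq_sqrt (by linarith)
  have hunn : 0 ≤ u := Real.sqrt_nonneg _
  have hvnn : 0 ≤ v := Real.sqrt_nonneg _
  have hxlt : x < -(t ^ 2) := by nlinarith
  have hx2gt : (t * s) ^ 2 < x ^ 2 := by nlinarith [mul_nonneg ht0.le hsnn]
  have h4 : (t * v) ^ 2 < (-(t ^ 2) - x) ^ 2 := by nlinarith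
  have h2 : t * v < -(t ^ 2) - x := by
    nlinarith [mul_nonneg ht0.le hvnn]
  have h1 : (2 * t + v) ^ 2 < u ^ 2 := by nlinarith
  exact lt_of_pow_lt_pow_left₀ 2 hunn h1

lemma dist_neg_right (P Q : EuclideanSpace ℝ (Fin 3)) : dist P (-Q) = dist (-P) Q := by
  rw [dist_eq_norm, dist_eq_norm, ← norm_neg (P - -Q)]
  congr 1
  abel

lemma dt_eq_min (t : ℝ) (ht0 : 0 < t) (ht1 : t ≤ 1) {P Q : EuclideanSpace ℝ (Fin 3)}
    (hP : P ∈ S2) (hQ : Q ∈ S2) :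
    dt t P Q = min (dist P Q) (2 * t + dist (-P) Q) := by
  have hP1 : ‖P‖ = 1 := by simpa [S2] using hP
  have hQ1 : ‖Q‖ = 1 := by simpa [S2] using hQ
  set x : ℝ := inner ℝ P Q with hxdef
  have hxabs : |x| ≤ 1 := by
    have := abs_real_inner_le_norm P Q
    rwa [hP1, hQ1, one_mul] at this
  have hx1 : -1 ≤ x := (abs_le.mp hxabs).1
  have hx2 : x ≤ 1 := (abs_le.mp hxabs).2
  have hdPQ : dist P Q = Real.sqrt (2 - 2 * x) := by
    rw [dist_eq_norm, ← Real.sqrt_sq (norm_nonneg (P - Q)), norm_sub_sq_real]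
    rw [hP1, hQ1, ← hxdef]
    congr 1
    ring
  have hdnPQ : dist (-P) Q = Real.sqrt (2 + 2 * x) := by
    have hn : dist (-P) Q = ‖P + Q‖ := by
      rw [dist_eq_norm, ← norm_neg (-P - Q)]
      congr 1
      abel
    rw [hn, ← Real.sqrt_sq (norm_nonneg (P + Q)), norm_add_sq_real]
    rw [hP1, hQ1, ← hxdef]
    congr 1
    ring
  have hangle : EuclideanGeometry.angle P (0 : EuclideanSpace ℝ (Fin 3)) Q = Real.arccos x := by
    simp [EuclideanGeometry.angle, InnerProductGeometry.angle, hP1, hQ1, hxdef]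
  -- properties of s and alpha
  have hs0 : (0:ℝ) ≤ 2 - t ^ 2 := by nlinarith
  set s := Real.sqrt (2 - t ^ 2) with hsdef
  have hs2 : s ^ 2 = 2 - t ^ 2 := Real.sq_sqrt hs0
  have hsnn : 0 ≤ s := Real.sqrt_nonneg _
  have hs1 : 1 ≤ s := by nlinarith
  have hsle2 : s ≤ 2 := by nlinarith
  have hy0 : (0:ℝ) ≤ (s - t) / 2 := by linarith
  have hy1 : (s - t) / 2 ≤ 1 := by linarith
  have hsin : Real.sin (alphaAngle t) = (s - t) / 2 :=
    Real.sin_arcsin (by linarith) hy1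
  have ha0 : 0 ≤ alphaAngle t := Real.arcsin_nonneg.mpr hy0
  have ha2 : alphaAngle t ≤ Real.pi / 2 := Real.arcsin_le_pi_div_two _
  have hcos2 : Real.cos (2 * alphaAngle t) = t * s := by
    have hpyth := Real.sin_sq_add_cos_sq (alphaAngle t)
    rw [hsin] at hpyth
    rw [Real.cos_two_mul]
    linear_combination 2 * hpyth - (1/2) * hs2
  have hcos : Real.cos (Real.pi - 2 * alphaAngle t) = -(t * s) := by
    rw [Real.cos_pi_sub, hcos2]
  have hts1 : t * s ≤ 1 := by
    have hts2' : (t * s) ^ 2 = t ^ 2 * (2 - t ^ 2) := by rw [mul_pow, hs2]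
    nlinarith [sq_nonneg (t * s - 1), sq_nonneg (1 - t ^ 2)]
  have htsnn : 0 ≤ t * s := mul_nonneg ht0.le hsnn
  have hthr : Real.pi - 2 * alphaAngle t = Real.arccos (-(t * s)) := by
    rw [← hcos, Real.arccos_cos (by linarith) (by linarith)]
  have hmemx : x ∈ Set.Icc (-1 : ℝ) 1 := ⟨hx1, hx2⟩
  have hmemc : -(t * s) ∈ Set.Icc (-1 : ℝ) 1 := ⟨by linarith, by linarith⟩
  have hiff : (EuclideanGeometry.angle P (0 : EuclideanSpace ℝ (Fin 3)) Q ≤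
      Real.pi - 2 * alphaAngle t) ↔ -(t * s) ≤ x := by
    rw [hangle, hthr, Real.strictAntiOn_arccos.le_iff_ge hmemx hmemc]
  unfold dt
  split_ifs with h
  · rw [hiff] at h
    refine (min_eq_left ?_).symm
    rw [hdPQ, hdnPQ]
    exact key_le t x ht0 ht1 hx1 hx2 h
  · rw [hiff] at h
    push_neg at h
    refine (min_eq_right ?_).symm
    rw [hdPQ, hdnPQ]
    exact (key_lt t x ht0 ht1 hx1 hx2 h).le

theorem dt_triangle (t : ℝ) (ht0 : 0 < t) (ht1 : t ≤ 1)
    (P Q R : EuclideanSpace ℝ (Fin 3)) (hP : P ∈ S2) (hQ : Q ∈ S2) (hR : R ∈ S2) :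
    dt t P Q + dt t Q R ≥ dt t P R := by
  rw [ge_iff_le, dt_eq_min t ht0 ht1 hP hQ, dt_eq_min t ht0 ht1 hQ hR,
    dt_eq_min t ht0 ht1 hP hR]
  have h1 : dist P R ≤ dist P Q + dist Q R := dist_triangle _ _ _
  have h2 : dist (-P) R ≤ dist (-P) Q + dist Q R := dist_triangle _ _ _
  have h3 : dist (-P) R ≤ dist P Q + dist (-Q) R := by
    calc dist (-P) R ≤ dist (-P) (-Q) + dist (-Q) R := dist_triangle _ _ _
      _ = dist P Q + dist (-Q) R := by rw [dist_neg_neg]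
  have h4 : dist P R ≤ dist (-P) Q + dist (-Q) R := by
    calc dist P R ≤ dist P (-Q) + dist (-Q) R := dist_triangle _ _ _
      _ = dist (-P) Q + dist (-Q) R := by rw [dist_neg_right]
  rcases min_cases (dist P Q) (2 * t + dist (-P) Q) with ⟨e1, -⟩ | ⟨e1, -⟩ <;>
    rcases min_cases (dist Q R) (2 * t + dist (-Q) R) with ⟨e2, -⟩ | ⟨e2, -⟩ <;>
      rw [e1, e2]
  · exact le_trans (min_le_left _ _) (by linarith)
  · exact le_trans (min_le_right _ _) (by linarith)
  · exact le_trans (min_le_right _ _) (by linarith)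
  · exact le_trans (min_le_left _ _) (by linarith)
end
end

section
/- For all 0 < t ≤ 1, the function d_t is locally Euclidean on S²: for every P ∈ S² there exists r > 0 such that d_t(Q,R) = d_E(Q,R) for all Q, R in the d_t-ball {S ∈ S² | d_t(P,S) < r}. -/
noncomputable section

theorem dt_locally_euclidean (t : ℝ) (ht0 : 0 < t) (ht1 : t ≤ 1)
    (P : EuclideanSpace ℝ (Fin 3)) (hP : P ∈ S2) :
    ∃ r : ℝ, 0 < r ∧ ∀ Q ∈ S2, ∀ R ∈ S2,
      dt t P Q < r → dt t P R < r → dt t Q R = dist Q R := by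
  have hαnn : 0 ≤ alphaAngle t := by
    rw [alphaAngle]
    apply Real.arcsin_nonneg.mpr
    have h1 : t ≤ Real.sqrt (2 - t ^ 2) := by
      have : t = Real.sqrt (t ^ 2) := by
        rw [Real.sqrt_sq ht0.le]
      rw [this]
      apply Real.sqrt_le_sqrt
      nlinarith
    linarith
  have hαlt : alphaAngle t < Real.pi / 2 := by
    rw [alphaAngle, Real.arcsin_lt_pi_div_two]
    have : Real.sqrt (2 - t ^ 2) ≤ Real.sqrt 2 := by
      apply Real.sqrt_le_sqrt; nlinarith
    have h2 : Real.sqrt 2 < 2 := by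
      nlinarith [Real.sq_sqrt (by norm_num : (2:ℝ) ≥ 0), Real.sqrt_nonneg 2]
    nlinarith
  set ε : ℝ := Real.pi - 2 * alphaAngle t with hεdef
  have hε0 : 0 < ε := by
    have := Real.pi_pos; simp only [hεdef]; linarith
  have hεπ : ε ≤ Real.pi := by simp only [hεdef]; linarith
  set c : ℝ := Real.cos ε with hcdef
  have hc1 : c < 1 := by
    have h := Real.strictAntiOn_cos ⟨le_rfl, Real.pi_pos.le⟩ ⟨hε0.le, hεπ⟩ hε0
    simpa [hcdef] using h
  have hcm1 : -1 ≤ c := Real.neg_one_le_cos ε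
  set r : ℝ := min t (Real.sqrt ((1 - c) / 2)) with hrdef
  have hr0 : 0 < r := by
    apply lt_min ht0
    apply Real.sqrt_pos.mpr; linarith
  refine ⟨r, hr0, ?_⟩
  intro Q hQ R hR hQr hRr
  have hnQ : ‖Q‖ = 1 := by simpa [S2, mem_sphere_iff_norm] using hQ
  have hnR : ‖R‖ = 1 := by simpa [S2, mem_sphere_iff_norm] using hR
  -- dt t P Q < r forces the Euclidean branch
  have key : ∀ X : EuclideanSpace ℝ (Fin 3), dt t P X < r → dist P X < r := by
    intro X hX
    rw [dt] at hX
    split_ifs at hX with h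
    · exact hX
    · exfalso
      have : r ≤ t := min_le_left _ _
      have := dist_nonneg (x := -P) (y := X)
      linarith
  have hPQ : dist P Q < r := key Q hQr
  have hPR : dist P R < r := key R hRr
  have hQR : dist Q R < 2 * r := by
    calc dist Q R ≤ dist Q P + dist P R := dist_triangle _ _ _
    _ < r + r := by rw [dist_comm Q P]; linarith
    _ = 2 * r := by ring
  have hr2 : r ≤ Real.sqrt ((1 - c) / 2) := min_le_right _ _
  have hsq : dist Q R ^ 2 < 2 * (1 - c) := by
    have h1 : dist Q R < 2 * Real.sqrt ((1 - c) / 2) := by linarith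
    have h2 : (2 * Real.sqrt ((1 - c) / 2)) ^ 2 = 2 * (1 - c) := by
      rw [mul_pow, Real.sq_sqrt (by linarith)]; ring
    nlinarith [dist_nonneg (x := Q) (y := R)]
  have hinner : c < inner ℝ Q R := by
    have hexp : dist Q R ^ 2 = 2 - 2 * (inner ℝ Q R : ℝ) := by
      rw [dist_eq_norm, norm_sub_sq_real, hnQ, hnR]; ring
    rw [hexp] at hsq; linarith
  have hinner1 : (inner ℝ Q R : ℝ) ≤ 1 := by
    have := real_inner_le_norm Q R
    rw [hnQ, hnR] at this; linarith
  have hangle : EuclideanGeometry.angle Q (0 : EuclideanSpace ℝ (Fin 3)) R ≤ ε := by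
    have : EuclideanGeometry.angle Q (0 : EuclideanSpace ℝ (Fin 3)) R
        = Real.arccos (inner ℝ Q R : ℝ) := by
      rw [EuclideanGeometry.angle, InnerProductGeometry.angle]
      simp [hnQ, hnR]
    rw [this]
    have hmano : Real.arccos (inner ℝ Q R : ℝ) ≤ Real.arccos c := by
      rw [Real.arccos, Real.arccos]
      have := Real.monotone_arcsin hinner.le
      linarith
    calc Real.arccos (inner ℝ Q R : ℝ) ≤ Real.arccos c := hmano
    _ = ε := by rw [hcdef, Real.arccos_cos hε0.le hεπ]
  rw [dt, if_pos hangle]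
end
end

section
/- For all 0 < t ≤ 1 and all points P, Q on the unit sphere S², the inequalities t·d_E(P,Q) ≤ d_t(P,Q) ≤ d_E(P,Q) hold. -/
noncomputable section

lemma key_arith (t c : ℝ) (ht0 : 0 < t) (ht1 : t ≤ 1) (hcm1 : -1 ≤ c)
    (hlt : c < -(t * Real.sqrt (2 - t ^ 2))) :
    t * Real.sqrt (2 - 2 * c) ≤ 2 * t + Real.sqrt (2 + 2 * c) ∧
    2 * t + Real.sqrt (2 + 2 * c) ≤ Real.sqrt (2 - 2 * c) := by
  set u : ℝ := Real.sqrt (2 - t ^ 2) with hu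
  have hu2 : u ^ 2 = 2 - t ^ 2 := Real.sq_sqrt (by nlinarith)
  have hu1 : 1 ≤ u := by nlinarith [Real.sqrt_nonneg (2 - t ^ 2)]
  clear_value u
  have hut : t ≤ u := le_trans ht1 hu1
  have hsq1 : Real.sqrt (2 + 2 * c) ≤ u - t := by
    have h1 : 2 + 2 * c ≤ (u - t) ^ 2 := by nlinarith
    calc Real.sqrt (2 + 2 * c) ≤ Real.sqrt ((u - t) ^ 2) := Real.sqrt_le_sqrt h1
      _ = u - t := Real.sqrt_sq (by linarith)
  have hsq2 : u + t ≤ Real.sqrt (2 - 2 * c) := by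
    have h1 : (u + t) ^ 2 ≤ 2 - 2 * c := by nlinarith
    calc (u + t) = Real.sqrt ((u + t) ^ 2) := (Real.sqrt_sq (by linarith)).symm
      _ ≤ Real.sqrt (2 - 2 * c) := Real.sqrt_le_sqrt h1
  have hsq3 : Real.sqrt (2 - 2 * c) ≤ 2 := by
    calc Real.sqrt (2 - 2 * c) ≤ Real.sqrt (2 ^ 2) := Real.sqrt_le_sqrt (by nlinarith)
      _ = 2 := Real.sqrt_sq (by norm_num)
  have hsq4 : 0 ≤ Real.sqrt (2 + 2 * c) := Real.sqrt_nonneg _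
  constructor
  · nlinarith
  · linarith

theorem dt_le_and_ge (t : ℝ) (ht0 : 0 < t) (ht1 : t ≤ 1)
    (P Q : EuclideanSpace ℝ (Fin 3)) (hP : P ∈ S2) (hQ : Q ∈ S2) :
    t * dist P Q ≤ dt t P Q ∧ dt t P Q ≤ dist P Q := by
  have hP1 : ‖P‖ = 1 := by simpa [S2, mem_sphere_zero_iff_norm] using hP
  have hQ1 : ‖Q‖ = 1 := by simpa [S2, mem_sphere_zero_iff_norm] using hQ
  set c : ℝ := inner ℝ P Q with hc
  have hc1 : c ≤ 1 := by
    have := real_inner_le_norm P Q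
    rw [hP1, hQ1] at this; linarith
  have hcm1 : -1 ≤ c := by
    have := abs_real_inner_le_norm P Q
    rw [hP1, hQ1] at this
    have := abs_le.mp (by linarith : |c| ≤ 1)
    linarith
  have hdPQ : dist P Q = Real.sqrt (2 - 2 * c) := by
    rw [dist_eq_norm]
    rw [show (2 - 2 * c) = ‖P - Q‖ ^ 2 by
      rw [@norm_sub_sq_real, hP1, hQ1]; ring]
    rw [Real.sqrt_sq (norm_nonneg _)]
  have hdPQ' : dist (-P) Q = Real.sqrt (2 + 2 * c) := by
    rw [dist_eq_norm, show -P - Q = -(P + Q) by abel, norm_neg]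
    rw [show (2 + 2 * c) = ‖P + Q‖ ^ 2 by
      rw [@norm_add_sq_real, hP1, hQ1]; ring]
    rw [Real.sqrt_sq (norm_nonneg _)]
  have hcos : Real.cos (EuclideanGeometry.angle P (0 : EuclideanSpace ℝ (Fin 3)) Q) = c := by
    rw [EuclideanGeometry.angle, InnerProductGeometry.cos_angle]
    simp only [vsub_eq_sub, sub_zero]
    rw [hP1, hQ1, ← hc]
    norm_num
  -- basic facts about u and s
  set u : ℝ := Real.sqrt (2 - t ^ 2) with hu
  have hu2 : u ^ 2 = 2 - t ^ 2 := Real.sq_sqrt (by nlinarith)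
  have hu1 : 1 ≤ u := by
    nlinarith [Real.sqrt_nonneg (2 - t ^ 2)]
  have hut : t ≤ u := le_trans ht1 hu1
  set s : ℝ := (u - t) / 2 with hs
  have hs0 : 0 ≤ s := by rw [hs]; linarith
  have hs1 : s ≤ 1 := by
    have : u ≤ 2 := by nlinarith [Real.sqrt_nonneg (2 - t ^ 2)]
    rw [hs]; linarith
  have hsin : Real.sin (alphaAngle t) = s := Real.sin_arcsin (by linarith) hs1
  have ha0 : 0 ≤ alphaAngle t := Real.arcsin_nonneg.mpr hs0
  have hapi : alphaAngle t ≤ Real.pi / 2 := Real.arcsin_le_pi_div_two _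
  unfold dt
  by_cases hcase : EuclideanGeometry.angle P (0 : EuclideanSpace ℝ (Fin 3)) Q ≤
      Real.pi - 2 * alphaAngle t
  · rw [if_pos hcase]
    constructor
    · nlinarith [dist_nonneg (x := P) (y := Q)]
    · exact le_refl _
  · rw [if_neg hcase]
    push_neg at hcase
    -- cos θ < cos (π - 2α)
    have hθ0 : 0 ≤ EuclideanGeometry.angle P 0 Q := EuclideanGeometry.angle_nonneg _ _ _
    have hθpi : EuclideanGeometry.angle P 0 Q ≤ Real.pi := EuclideanGeometry.angle_le_pi _ _ _
    have hcoslt : c < Real.cos (Real.pi - 2 * alphaAngle t) := by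
      rw [← hcos]
      apply Real.cos_lt_cos_of_nonneg_of_le_pi _ hθpi hcase
      linarith
    have hcospi : Real.cos (Real.pi - 2 * alphaAngle t) = -(t * u) := by
      rw [Real.cos_pi_sub, Real.cos_two_mul]
      have hc2 : Real.cos (alphaAngle t) ^ 2 = 1 - s ^ 2 := by
        have := Real.sin_sq_add_cos_sq (alphaAngle t)
        rw [hsin] at this; linarith
      rw [hc2, hs]
      nlinarith
    rw [hcospi] at hcoslt
    rw [hdPQ, hdPQ']
    exact key_arith t c ht0 ht1 hcm1 (by rw [← hu]; linarith)
end
end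

section
/- For all 0 < t ≤ 1 and all P, Q ∈ ℝ³, the inequalities t·d_E(P,Q) ≤ ρ_t(P,Q) ≤ d_E(P,Q) hold. -/
noncomputable section

/-- A point on the unit sphere at Euclidean distance `r` (for `0 ≤ r ≤ 2`) from the
base point `spherePt 0 = (1,0,0)`. -/
def spherePt (r : ℝ) : EuclideanSpace ℝ (Fin 3) :=
  (WithLp.equiv 2 (Fin 3 → ℝ)).symm ![1 - r ^ 2 / 2, r * Real.sqrt (1 - r ^ 2 / 4), 0]

/-- The value `d_t(ε⁻¹(X), ε⁻¹(Y))` for points `X, Y ∈ ℝ³` with `d_E(X,Y) ≤ 2`, computed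
via the concrete pair of unit-sphere points `spherePt 0`, `spherePt (d_E(X,Y))` at the same
Euclidean distance; by invariance of `d_t` under Euclidean isometries this agrees with the
value obtained from any isometric embedding `ε : S² → ℝ³` whose image contains `X` and `Y`. -/
def dtChord (t r : ℝ) : ℝ := dt t (spherePt 0) (spherePt r)

/-- The set of values `∑_{i=1}^n d_t(X_{i-1}, X_i)` over all chains
`(X_0, …, X_n) ∈ Γ_{P,Q}`, i.e. chains from `P` to `Q` with all steps of Euclidean
length at most `2`. -/
def chainSums (t : ℝ) (P Q : EuclideanSpace ℝ (Fin 3)) : Set ℝ :=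
  { s : ℝ | ∃ n : ℕ, ∃ X : Fin (n + 1) → EuclideanSpace ℝ (Fin 3),
      X 0 = P ∧ X (Fin.last n) = Q ∧
      (∀ i : Fin n, dist (X i.castSucc) (X i.succ) ≤ 2) ∧
      s = ∑ i : Fin n, dtChord t (dist (X i.castSucc) (X i.succ)) }

/-- The metric `ρ_t(P,Q) = inf { ∑_{i=1}^n d_t(X_{i-1},X_i) | (X_0,…,X_n) ∈ Γ_{P,Q} }`. -/
def rho (t : ℝ) (P Q : EuclideanSpace ℝ (Fin 3)) : ℝ := sInf (chainSums t P Q)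


lemma dist_spherePt {r : ℝ} (h0 : 0 ≤ r) (h2 : r ≤ 2) :
    dist (spherePt 0) (spherePt r) = r := by
  have hs : Real.sqrt (1 - r ^ 2 / 4) ^ 2 = 1 - r ^ 2 / 4 :=
    Real.sq_sqrt (by nlinarith)
  have hs' : r ^ 2 * Real.sqrt (1 - r ^ 2 / 4) ^ 2 = r ^ 2 * (1 - r ^ 2 / 4) := by rw [hs]
  rw [EuclideanSpace.dist_eq, Fin.sum_univ_three]
  simp only [spherePt, WithLp.equiv_symm_apply, WithLp.ofLp_toLp, Matrix.cons_val_zero, Matrix.cons_val_one,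
    Matrix.head_cons, Matrix.cons_val_two, Matrix.tail_cons, Real.dist_eq]
  rw [show √(1 - (0:ℝ)^2/4) = 1 by simp]
  have : |1 - 0 ^ 2 / 2 - (1 - r ^ 2 / 2)| ^ 2 + |0 * 1 - r * Real.sqrt (1 - r ^ 2 / 4)| ^ 2
      + |(0:ℝ) - 0| ^ 2 = r ^ 2 := by
    rw [sq_abs, sq_abs, sq_abs]; ring_nf; ring_nf at hs'; linarith
  rw [this, Real.sqrt_sq h0]

lemma norm_spherePt {r : ℝ} (h0 : 0 ≤ r) (h2 : r ≤ 2) : ‖spherePt r‖ = 1 := by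
  have hs : Real.sqrt (1 - r ^ 2 / 4) ^ 2 = 1 - r ^ 2 / 4 :=
    Real.sq_sqrt (by nlinarith)
  have hs' : r ^ 2 * Real.sqrt (1 - r ^ 2 / 4) ^ 2 = r ^ 2 * (1 - r ^ 2 / 4) := by rw [hs]
  rw [EuclideanSpace.norm_eq, Fin.sum_univ_three]
  simp only [spherePt, WithLp.equiv_symm_apply, WithLp.ofLp_toLp, Matrix.cons_val_zero, Matrix.cons_val_one,
    Matrix.head_cons, Matrix.cons_val_two, Matrix.tail_cons, Real.norm_eq_abs]
  have : |1 - r ^ 2 / 2| ^ 2 + |r * Real.sqrt (1 - r ^ 2 / 4)| ^ 2 + |(0:ℝ)| ^ 2 = 1 := by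
    rw [sq_abs, sq_abs, sq_abs]; ring_nf; ring_nf at hs'; linarith
  rw [this, Real.sqrt_one]

lemma inner_spherePt {r : ℝ} :
    (inner ℝ (spherePt 0) (spherePt r) : ℝ) = 1 - r ^ 2 / 2 := by
  rw [PiLp.inner_apply, Fin.sum_univ_three]
  simp only [spherePt, WithLp.equiv_symm_apply, WithLp.ofLp_toLp, Matrix.cons_val_zero, Matrix.cons_val_one,
    Matrix.head_cons, Matrix.cons_val_two, Matrix.tail_cons, RCLike.inner_apply, conj_trivial]
  ring

lemma angle_spherePt {r : ℝ} (h0 : 0 ≤ r) (h2 : r ≤ 2) :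
    EuclideanGeometry.angle (spherePt 0) (0 : EuclideanSpace ℝ (Fin 3)) (spherePt r)
      = Real.arccos (1 - r ^ 2 / 2) := by
  rw [EuclideanGeometry.angle, vsub_eq_sub, vsub_eq_sub, sub_zero, sub_zero,
    InnerProductGeometry.angle, inner_spherePt, norm_spherePt le_rfl (by norm_num),
    norm_spherePt h0 h2]
  norm_num

lemma alphaAngle_le {t : ℝ} (ht0 : 0 < t) : alphaAngle t ≤ Real.pi / 4 := by
  have hpi : Real.pi / 4 ∈ Set.Ico (-(Real.pi / 2)) (Real.pi / 2) := by
    constructor <;> nlinarith [Real.pi_pos]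
  rw [alphaAngle, Real.arcsin_le_iff_le_sin' hpi, Real.sin_pi_div_four]
  have h1 : Real.sqrt (2 - t ^ 2) ≤ Real.sqrt 2 := Real.sqrt_le_sqrt (by nlinarith)
  linarith


lemma dtChord_ge {t r : ℝ} (ht0 : 0 < t) (ht1 : t ≤ 1) (h0 : 0 ≤ r) (h2 : r ≤ 2) :
    t * r ≤ dtChord t r := by
  rw [dtChord, dt]
  split
  · rw [dist_spherePt h0 h2]; nlinarith
  · have := dist_nonneg (x := -spherePt 0) (y := spherePt r); nlinarith

lemma dtChord_eq {t r : ℝ} (ht0 : 0 < t) (h0 : 0 ≤ r) (h1 : r ≤ 1) :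
    dtChord t r = r := by
  rw [dtChord, dt, if_pos, dist_spherePt h0 (by linarith)]
  rw [angle_spherePt h0 (by linarith)]
  have ha : Real.arccos (1 - r ^ 2 / 2) ≤ Real.pi / 2 :=
    Real.arccos_le_pi_div_two.2 (by nlinarith)
  have := alphaAngle_le ht0
  linarith

open Fin.NatCast in
theorem rho_le_and_ge (t : ℝ) (ht0 : 0 < t) (ht1 : t ≤ 1)
    (P Q : EuclideanSpace ℝ (Fin 3)) :
    t * dist P Q ≤ rho t P Q ∧ rho t P Q ≤ dist P Q := by
  set d := dist P Q with hd
  have hd0 : 0 ≤ d := dist_nonneg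
  -- membership of d in chainSums
  set n : ℕ := ⌈d⌉₊ + 1 with hn
  have hnpos : 0 < (n : ℝ) := by positivity
  have hdn : d ≤ n := by
    calc d ≤ (⌈d⌉₊ : ℝ) := Nat.le_ceil d
    _ ≤ n := by exact_mod_cast Nat.le_succ _
  have hstep0 : 0 ≤ d / n := by positivity
  have hstep1 : d / n ≤ 1 := by rw [div_le_one hnpos]; exact hdn
  set X : Fin (n + 1) → EuclideanSpace ℝ (Fin 3) :=
    fun i => P + (((i : ℕ) : ℝ) / n) • (Q - P) with hX
  have hX0 : X 0 = P := by simp [hX]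
  have hXl : X (Fin.last n) = Q := by
    simp only [hX, Fin.val_last]
    rw [div_self (ne_of_gt hnpos), one_smul]
    abel
  have hXstep : ∀ i : Fin n, dist (X i.castSucc) (X i.succ) = d / n := by
    intro i
    simp only [hX, Fin.coe_castSucc, Fin.val_succ, dist_eq_norm]
    have heq : (P + (((i : ℕ) : ℝ) / n) • (Q - P)) - (P + ((((i : ℕ) + 1 : ℕ) : ℝ) / n) • (Q - P))
        = -((1 : ℝ) / n) • (Q - P) := by
      push_cast
      module
    rw [heq, norm_smul, Real.norm_eq_abs, abs_neg, abs_of_nonneg (by positivity),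
      norm_sub_rev, ← dist_eq_norm, ← hd]
    ring
  have hmem : d ∈ chainSums t P Q := by
    refine ⟨n, X, hX0, hXl, ?_, ?_⟩
    · intro i; rw [hXstep i]; linarith
    · have : ∀ i : Fin n, dtChord t (dist (X i.castSucc) (X i.succ)) = d / n := by
        intro i; rw [hXstep i, dtChord_eq ht0 hstep0 hstep1]
      rw [Finset.sum_congr rfl (fun i _ => this i), Finset.sum_const, Finset.card_univ,
        Fintype.card_fin, nsmul_eq_mul]
      field_simp
  -- lower bound for every chain sum
  have hlb : ∀ s ∈ chainSums t P Q, t * d ≤ s := by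
    rintro s ⟨m, Y, hY0, hYl, hYstep, rfl⟩
    set f : ℕ → EuclideanSpace ℝ (Fin 3) := fun k => Y (k : Fin (m + 1)) with hf
    have hf0 : f 0 = P := by rw [hf]; simpa using hY0
    have hfm : f m = Q := by
      have h2 : ((m : ℕ) : Fin (m + 1)) = Fin.last m := by
        ext; simp [Fin.val_cast_of_lt (Nat.lt_succ_self m)]
      simp only [hf]
      rw [h2, hYl]
    have hcast : ∀ i : Fin m, f i = Y i.castSucc ∧ f (i + 1) = Y i.succ := by
      intro i
      constructor
      · simp only [hf]
        ext
        simp [Fin.val_cast_of_lt (Nat.lt_succ_of_lt i.isLt)]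
      · simp only [hf]
        ext
        simp [Fin.val_cast_of_lt (Nat.succ_lt_succ i.isLt)]
    have htri : d ≤ ∑ i : Fin m, dist (Y i.castSucc) (Y i.succ) := by
      have h1 := dist_le_range_sum_dist f m
      rw [hf0, hfm] at h1
      rw [← hd] at h1
      calc d ≤ ∑ i ∈ Finset.range m, dist (f i) (f (i + 1)) := h1
      _ = ∑ i : Fin m, dist (f (i : ℕ)) (f ((i : ℕ) + 1)) :=
          (Fin.sum_univ_eq_sum_range (fun k => dist (f k) (f (k + 1))) m).symm
      _ = ∑ i : Fin m, dist (Y i.castSucc) (Y i.succ) := by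
          refine Finset.sum_congr rfl (fun i _ => ?_)
          rw [(hcast i).1, (hcast i).2]
    calc t * d ≤ t * ∑ i : Fin m, dist (Y i.castSucc) (Y i.succ) := by nlinarith
    _ = ∑ i : Fin m, t * dist (Y i.castSucc) (Y i.succ) := Finset.mul_sum _ _ _
    _ ≤ ∑ i : Fin m, dtChord t (dist (Y i.castSucc) (Y i.succ)) :=
        Finset.sum_le_sum (fun i _ => dtChord_ge ht0 ht1 dist_nonneg (hYstep i))
  constructor
  · exact le_csInf ⟨d, hmem⟩ hlb
  · exact csInf_le ⟨t * d, hlb⟩ hmem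
end
end
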